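/- Let n, d be positive integers, p : Fin n → ℝ a probability distribution (p ≥ 0, ∑_i p_i = 1), and σ : Fin n → Matrix (Fin d) (Fin d) ℂ a family of density matrices. Let ρ be the block-diagonal matrix indexed by Fin n × Fin d with entries ρ((i,a),(j,b)) = p_i·σ_i(a,b) if i = j and 0 otherwise. Then S(ρ) = ∑_i (−p_i·log₂ p_i) + ∑_i p_i·S(σ_i). (Entropy of a classical-quantum state.) -/

import Mathlib

open Matrix BigOperators Kronecker
open scoped ComplexOrder

noncomputable section
open Classical

/-- The positive semidefinite square root of a matrix (junk value `0` if not PSD). -/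
def msqrt {d : Type*} [Fintype d] [DecidableEq d] (A : Matrix d d ℂ) : Matrix d d ℂ :=
  if h : A.PosSemidef then
    (h.1.eigenvectorUnitary : Matrix d d ℂ) *
      diagonal (fun i => ((Real.sqrt (h.1.eigenvalues i) : ℝ) : ℂ)) *
      (star (h.1.eigenvectorUnitary : Matrix d d ℂ))
  else 0

/-- The trace norm `Tr √(AᴴA)` of a complex matrix. -/
def traceNorm {d : Type*} [Fintype d] [DecidableEq d] (A : Matrix d d ℂ) : ℝ :=
  ((msqrt (Aᴴ * A)).trace).re

/-- `ρ` is a density matrix: positive semidefinite with trace `1`. -/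
def IsDensityMatrix {d : Type*} [Fintype d] [DecidableEq d] (ρ : Matrix d d ℂ) : Prop :=
  ρ.PosSemidef ∧ ρ.trace = 1

/-- Von Neumann entropy, base 2 (junk value `0` if not Hermitian). -/
def vnEntropy {d : Type*} [Fintype d] [DecidableEq d] (ρ : Matrix d d ℂ) : ℝ :=
  if h : ρ.IsHermitian then -∑ i, (h.eigenvalues i) * Real.logb 2 (h.eigenvalues i) else 0

/-- The binary entropy function, base 2. -/
def binEntropy (p : ℝ) : ℝ := -p * Real.logb 2 p - (1 - p) * Real.logb 2 (1 - p)

/-- Fidelity of two matrices: `(Tr √(√ρ₁ ρ₂ √ρ₁))²`. -/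
def fidelity {d : Type*} [Fintype d] [DecidableEq d] (ρ₁ ρ₂ : Matrix d d ℂ) : ℝ :=
  (((msqrt (msqrt ρ₁ * ρ₂ * msqrt ρ₁)).trace).re) ^ 2

/-- Partial trace over the second tensor factor. -/
def ptraceSnd {m k : ℕ} (ρ : Matrix (Fin m × Fin k) (Fin m × Fin k) ℂ) :
    Matrix (Fin m) (Fin m) ℂ :=
  Matrix.of fun i j => ∑ l : Fin k, ρ (i, l) (j, l)

end

/-!
Up to swapping the two factors of the index set, `ρ` is the block diagonal matrix with
blocks `pᵢ σᵢ`. Comparing characteristic polynomials, its eigenvalues are the products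
`pᵢ λᵢₐ`, where `λᵢₐ` are the eigenvalues of `σᵢ`, and `xy log(xy) = y · x log x + x · y log y`
together with `∑ₐ λᵢₐ = Tr σᵢ = 1` splits the entropy.
-/

open Polynomial

theorem Real.mul_logb_mul (b x y : ℝ) :
    x * y * Real.logb b (x * y) = y * (x * Real.logb b x) + x * (y * Real.logb b y) := by
  rcases eq_or_ne x 0 with rfl | hx
  · simp
  rcases eq_or_ne y 0 with rfl | hy
  · simp
  rw [Real.logb_mul hx hy]
  ring

namespace Matrix

section Charpoly

variable {R : Type*} [CommRing R] {n o : Type*} [Fintype n] [DecidableEq n]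
  [Fintype o] [DecidableEq o]

theorem charmatrix_blockDiagonal (M : o → Matrix n n R) :
    charmatrix (blockDiagonal M) = blockDiagonal fun i => charmatrix (M i) := by
  ext ⟨a, i⟩ ⟨b, j⟩
  by_cases hij : i = j
  · subst hij
    by_cases hab : a = b <;> simp [blockDiagonal_apply, hab]
  · simp [blockDiagonal_apply_ne _ _ _ hij, hij]

theorem charpoly_blockDiagonal (M : o → Matrix n n R) :
    (blockDiagonal M).charpoly = ∏ i, (M i).charpoly := by
  rw [charpoly, charmatrix_blockDiagonal, det_blockDiagonal]
  rfl

end Charpoly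

namespace IsHermitian

variable {𝕜 : Type*} [RCLike 𝕜] {n : Type*} [Fintype n] [DecidableEq n]
  {A : Matrix n n 𝕜}

theorem sum_eigenvalues_eq_of_charpoly_eq (hA : A.IsHermitian) {ι : Type*} [Fintype ι]
    (μ : ι → ℝ) (h : A.charpoly = ∏ i, (X - C (μ i : 𝕜))) (f : ℝ → ℝ) :
    ∑ k, f (hA.eigenvalues k) = ∑ i, f (μ i) := by
  have hroots : (Finset.univ.val.map hA.eigenvalues).map (RCLike.ofReal : ℝ → 𝕜) =
      (Finset.univ.val.map μ).map RCLike.ofReal := by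
    rw [Multiset.map_map, ← hA.roots_charpoly_eq_eigenvalues, h, roots_prod _ _ (by
      simp [Finset.prod_ne_zero_iff, X_sub_C_ne_zero])]
    simp [Multiset.map_map]
  change (Finset.univ.val.map (f ∘ hA.eigenvalues)).sum = (Finset.univ.val.map (f ∘ μ)).sum
  rw [← Multiset.map_map, ← Multiset.map_map,
    Multiset.map_injective RCLike.ofReal_injective hroots]

theorem charpoly_real_smul (hA : A.IsHermitian) (c : ℝ) :
    ((c : 𝕜) • A).charpoly = ∏ i, (X - C ((c * hA.eigenvalues i : ℝ) : 𝕜)) := by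
  have hdiag : (c : 𝕜) • diagonal (RCLike.ofReal ∘ hA.eigenvalues) =
      diagonal fun i => ((c * hA.eigenvalues i : ℝ) : 𝕜) := by
    ext i j
    by_cases hij : i = j <;> simp [hij]
  conv_lhs => rw [hA.spectral_theorem]
  rw [← map_smul, hdiag, Unitary.conjStarAlgAut_apply, charpoly_mul_comm,
    ← mul_assoc, Unitary.coe_star_mul_self, one_mul, charpoly_diagonal]

end IsHermitian

end Matrix

section Entropy

variable {n : Type*} [Fintype n] [DecidableEq n]

theorem vnEntropy_eq_of_charpoly_eq {A : Matrix n n ℂ} (hA : A.IsHermitian) {ι : Type*}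
    [Fintype ι] (μ : ι → ℝ) (h : A.charpoly = ∏ i, (X - C (μ i : ℂ))) :
    vnEntropy A = -∑ i, μ i * Real.logb 2 (μ i) := by
  rw [vnEntropy, dif_pos hA,
    hA.sum_eigenvalues_eq_of_charpoly_eq μ h (fun t => t * Real.logb 2 t)]

theorem vnEntropy_reindex {m : Type*} [Fintype m] [DecidableEq m] (e : n ≃ m)
    (A : Matrix n n ℂ) : vnEntropy (reindex e e A) = vnEntropy A := by
  by_cases hA : A.IsHermitian
  · rw [vnEntropy_eq_of_charpoly_eq (hA.reindex e) hA.eigenvalues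
      (by rw [charpoly_reindex]; exact hA.charpoly_eq), vnEntropy, dif_pos hA]
  · have hA' : ¬ (reindex e e A).IsHermitian := by simpa [reindex_apply] using hA
    rw [vnEntropy, dif_neg hA', vnEntropy, dif_neg hA]

theorem vnEntropy_blockDiagonal {o : Type*} [Fintype o] [DecidableEq o]
    {M : o → Matrix n n ℂ} (hM : ∀ i, (M i).IsHermitian) :
    vnEntropy (blockDiagonal M) = ∑ i, vnEntropy (M i) := by
  rw [vnEntropy_eq_of_charpoly_eq (isHermitian_blockDiagonal_iff.mpr hM)
      (fun x : n × o => (hM x.2).eigenvalues x.1),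
    Fintype.sum_prod_type_right, ← Finset.sum_neg_distrib]
  · simp only [vnEntropy, dif_pos (hM _)]
  · rw [charpoly_blockDiagonal, Fintype.prod_prod_type_right]
    exact Finset.prod_congr rfl fun i _ => (hM i).charpoly_eq

theorem vnEntropy_real_smul {A : Matrix n n ℂ} (hA : A.IsHermitian) (c : ℝ) :
    vnEntropy ((c : ℂ) • A) = -(c * Real.logb 2 c) * A.trace.re + c * vnEntropy A := by
  rw [vnEntropy_eq_of_charpoly_eq (hA.smul (Complex.conj_ofReal c))
    (fun i => c * hA.eigenvalues i) (hA.charpoly_real_smul c),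
    vnEntropy, dif_pos hA, hA.trace_eq_sum_eigenvalues]
  simp only [Real.mul_logb_mul, Finset.sum_add_distrib, ← Finset.sum_mul, ← Finset.mul_sum,
    Complex.re_sum, Complex.coe_algebraMap, Complex.ofReal_re]
  ring

end Entropy

theorem entropy_cq_state_general (n d : ℕ) (p : Fin n → ℝ)
    (σ : Fin n → Matrix (Fin d) (Fin d) ℂ) (hσ : ∀ i, IsDensityMatrix (σ i)) :
    vnEntropy (Matrix.of fun x y : Fin n × Fin d =>
        if x.1 = y.1 then (p x.1 : ℂ) * σ x.1 x.2 y.2 else 0) =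
      (∑ i, -(p i * Real.logb 2 (p i))) + ∑ i, p i * vnEntropy (σ i) := by
  have hρ : (Matrix.of fun x y : Fin n × Fin d =>
        if x.1 = y.1 then (p x.1 : ℂ) * σ x.1 x.2 y.2 else 0) =
      reindex (Equiv.prodComm _ _) (Equiv.prodComm _ _)
        (blockDiagonal fun i => (p i : ℂ) • σ i) := by
    ext ⟨i, a⟩ ⟨j, b⟩
    simp [blockDiagonal_apply]
  have hσH : ∀ i, (σ i).IsHermitian := fun i => (hσ i).1.1
  rw [hρ, vnEntropy_reindex,
    vnEntropy_blockDiagonal fun i => (hσH i).smul (Complex.conj_ofReal (p i)),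
    ← Finset.sum_add_distrib]
  refine Finset.sum_congr rfl fun i _ => ?_
  rw [vnEntropy_real_smul (hσH i), (hσ i).2]
  simp

/-- Entropy of a classical-quantum (block diagonal) state:
`S(∑ᵢ pᵢ |i⟩⟨i| ⊗ σᵢ) = H(p) + ∑ᵢ pᵢ S(σᵢ)`. -/
theorem entropy_cq_state (n d : ℕ) (hn : 0 < n) (hd : 0 < d)
    (p : Fin n → ℝ) (hp0 : ∀ i, 0 ≤ p i) (hp1 : ∑ i, p i = 1)
    (σ : Fin n → Matrix (Fin d) (Fin d) ℂ) (hσ : ∀ i, IsDensityMatrix (σ i)) :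
    vnEntropy (Matrix.of fun x y : Fin n × Fin d =>
        if x.1 = y.1 then (p x.1 : ℂ) * σ x.1 x.2 y.2 else 0) =
      (∑ i, -(p i * Real.logb 2 (p i))) + ∑ i, p i * vnEntropy (σ i) :=
  entropy_cq_state_general n d p σ hσ
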